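/- arXiv:2402.05768 — 5 statements merged into one kernel-verified Lean document; each statement's English description precedes it below -/
import Mathlib

section
/- Fix real numbers ω > 0, h > 0, α ≥ 1/2, and β ≥ 0. Every complex eigenvalue of the Newmark amplification matrix T_{α,β,ω,h} has absolute value at most 1 if and only if ω²·h²·(α/2 − β) ≤ 1. Equivalently (when β < α/2), the Newmark scheme is spectrally stable if and only if h ≤ (1/ω)·√(1/(α/2 − β)). -/
/-!
The characteristic polynomial of the Newmark matrix is `μ (μ² - S μ + P)`, where `S` and `P` are
the sum and product of its two nonzero eigenvalues. By the Schur–Cohn (Jury) criterion both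
roots of a real quadratic `μ² - S μ + P` lie in the closed unit disk iff `P ≤ 1` and
`|S| ≤ 1 + P`. For `α ≥ 1/2` the conditions `P ≤ 1` and `S ≤ 1 + P` always hold, and
`1 + P + S = 4 (1 - ω²h²(α/2 - β)) / (1 + βω²h²)`, which gives the stability bound.
-/

/-- The Newmark amplification matrix `T_{α,β,ω,h}` for the scalar oscillator
`ẍ = -ω²·x`, acting on states `(x, v, a) ∈ ℝ³`: it sends `(x, v, a)` to the
unique `(x', v', a')` with `x' = (x + h·v + (1/2 − β)·h²·a)/(1 + β·ω²·h²)`,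
`a' = −ω²·x'`, `v' = v + h·((1 − α)·a + α·a')`. -/
noncomputable def NewmarkMatrix (ω h α β : ℝ) : Matrix (Fin 3) (Fin 3) ℝ :=
  let D := 1 + β * ω ^ 2 * h ^ 2
  !![1 / D, h / D, (1 / 2 - β) * h ^ 2 / D;
     -(α * ω ^ 2 * h) / D, 1 - α * ω ^ 2 * h ^ 2 / D,
       h * (1 - α) - α * (1 / 2 - β) * ω ^ 2 * h ^ 3 / D;
     -ω ^ 2 / D, -(ω ^ 2 * h) / D, -((1 / 2 - β) * ω ^ 2 * h ^ 2) / D]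

theorem Matrix.hasEigenvalue_toLin'_iff_det_eq_zero {K n : Type*} [Field K] [Fintype n]
    [DecidableEq n] (A : Matrix n n K) (μ : K) :
    Module.End.HasEigenvalue (Matrix.toLin' A) μ ↔ (Matrix.scalar n μ - A).det = 0 := by
  rw [Module.End.hasEigenvalue_iff_isRoot_charpoly, Matrix.charpoly_toLin', Polynomial.IsRoot,
    Matrix.eval_charpoly]

theorem abs_add_le_one_add_mul {a b : ℝ} (ha : |a| ≤ 1) (hb : |b| ≤ 1) :
    |a + b| ≤ 1 + a * b := by
  rw [abs_le] at ha hb ⊢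
  constructor <;> nlinarith

theorem abs_le_one_of_quadratic_eq_zero {S P r : ℝ} (hP : P ≤ 1) (hS : |S| ≤ 1 + P)
    (hr : r ^ 2 - S * r + P = 0) : |r| ≤ 1 := by
  rw [abs_le] at hS ⊢
  obtain ⟨hS₁, hS₂⟩ := hS
  -- `S - r` is the other root and `r * (S - r) = P ≤ 1`, so `r` cannot lie beyond `±1`.
  constructor
  · by_contra! hlt
    nlinarith [mul_nonneg (by linarith : (0 : ℝ) ≤ -1 - r) (by nlinarith : (0 : ℝ) ≤ -1 - (S - r))]
  · by_contra! hgt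
    nlinarith [mul_pos (by linarith : (0 : ℝ) < r - 1) (by nlinarith : (0 : ℝ) < (S - r) - 1)]

theorem Complex.normSq_eq_of_quadratic_eq_zero {S P : ℝ} {μ : ℂ} (hμ : μ.im ≠ 0)
    (h : μ ^ 2 - S * μ + P = 0) : Complex.normSq μ = P := by
  have hre := congrArg Complex.re h
  have him := congrArg Complex.im h
  simp only [sq, Complex.sub_re, Complex.add_re, Complex.mul_re, Complex.ofReal_re,
    Complex.ofReal_im, Complex.sub_im, Complex.add_im, Complex.mul_im, Complex.zero_re,
    Complex.zero_im] at hre him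
  have hS : 2 * μ.re - S = 0 :=
    mul_left_cancel₀ hμ (by linear_combination him : μ.im * (2 * μ.re - S) = μ.im * 0)
  rw [Complex.normSq_apply]
  linear_combination -hre + μ.re * hS

theorem quadratic_roots_norm_le_one_iff (S P : ℝ) :
    (∀ μ : ℂ, μ ^ 2 - S * μ + P = 0 → ‖μ‖ ≤ 1) ↔ P ≤ 1 ∧ |S| ≤ 1 + P := by
  constructor
  · intro H
    rcases lt_or_ge (S ^ 2) (4 * P) with hd | hd
    · set t := √(4 * P - S ^ 2)
      have ht : t ^ 2 = 4 * P - S ^ 2 := Real.sq_sqrt (by linarith)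
      have hroot := H ⟨S / 2, t / 2⟩ <| Complex.ext
        (by simp only [sq, Complex.add_re, Complex.sub_re, Complex.mul_re, Complex.ofReal_re,
              Complex.ofReal_im, zero_mul, sub_zero, Complex.zero_re]
            linear_combination -ht / 4)
        (by simp only [sq, Complex.add_im, Complex.sub_im, Complex.mul_im, Complex.ofReal_re,
              Complex.ofReal_im, zero_mul, add_zero, Complex.zero_im]
            ring)
      have hP : P ≤ 1 := by
        rw [← sq_le_one_iff₀ (norm_nonneg _), Complex.sq_norm, Complex.normSq_mk] at hroot
        linear_combination hroot - ht / 4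
      -- `S² < 4P ≤ (1 + P)²`
      refine ⟨hP, abs_le_of_sq_le_sq ?_ (by nlinarith)⟩
      nlinarith
    · set t := √(S ^ 2 - 4 * P)
      have ht : t ^ 2 = S ^ 2 - 4 * P := Real.sq_sqrt (by linarith)
      have real_root (r : ℝ) (hr : r ^ 2 - S * r + P = 0) : |r| ≤ 1 := by
        simpa using H r (by exact_mod_cast hr)
      have hr₁ := real_root ((S + t) / 2) (by linear_combination ht / 4)
      have hr₂ := real_root ((S - t) / 2) (by linear_combination ht / 4)
      have hprod : (S + t) / 2 * ((S - t) / 2) = P := by linear_combination -ht / 4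
      have hsum : (S + t) / 2 + (S - t) / 2 = S := by ring
      refine ⟨?_, ?_⟩
      · rw [← hprod]
        exact (le_abs_self _).trans (by rw [abs_mul]; exact mul_le_one₀ hr₁ (abs_nonneg _) hr₂)
      · simpa only [hsum, hprod] using abs_add_le_one_add_mul hr₁ hr₂
  · rintro ⟨hP, hS⟩ μ hμ
    by_cases him : μ.im = 0
    · rw [← Complex.abs_re_eq_norm.mpr him]
      refine abs_le_one_of_quadratic_eq_zero hP hS ?_
      simpa [sq, him] using congrArg Complex.re hμ
    · rw [← sq_le_one_iff₀ (norm_nonneg μ), Complex.sq_norm,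
        Complex.normSq_eq_of_quadratic_eq_zero him hμ]
      exact hP

noncomputable def newmarkEigSum (ω h α β : ℝ) : ℝ :=
  (2 - ω ^ 2 * h ^ 2 * (α + 1 / 2 - 2 * β)) / (1 + β * ω ^ 2 * h ^ 2)

noncomputable def newmarkEigProd (ω h α β : ℝ) : ℝ :=
  (1 + ω ^ 2 * h ^ 2 * (1 / 2 + β - α)) / (1 + β * ω ^ 2 * h ^ 2)

theorem det_scalar_sub_newmarkMatrix {ω h α β : ℝ} (hD : 1 + β * ω ^ 2 * h ^ 2 ≠ 0) (μ : ℂ) :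
    (Matrix.scalar (Fin 3) μ - (NewmarkMatrix ω h α β).map Complex.ofReal).det =
      μ * (μ ^ 2 - newmarkEigSum ω h α β * μ + newmarkEigProd ω h α β) := by
  have hD' : (1 + β * ω ^ 2 * h ^ 2 : ℂ) ≠ 0 := by exact_mod_cast hD
  simp only [Matrix.det_fin_three, Matrix.sub_apply, Matrix.scalar_apply, Matrix.diagonal_apply,
    Matrix.map_apply, NewmarkMatrix, Matrix.of_apply, Matrix.cons_val', Matrix.cons_val_zero,
    Matrix.cons_val_one, Matrix.cons_val, Matrix.cons_val_fin_one, newmarkEigSum, newmarkEigProd]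
  push_cast
  field_simp
  ring

theorem newmark_hasEigenvalue_iff {ω h α β : ℝ} (hD : 1 + β * ω ^ 2 * h ^ 2 ≠ 0) (μ : ℂ) :
    Module.End.HasEigenvalue (Matrix.toLin' ((NewmarkMatrix ω h α β).map Complex.ofReal)) μ ↔
      μ = 0 ∨ μ ^ 2 - newmarkEigSum ω h α β * μ + newmarkEigProd ω h α β = 0 := by
  rw [Matrix.hasEigenvalue_toLin'_iff_det_eq_zero, det_scalar_sub_newmarkMatrix hD, mul_eq_zero]

theorem newmark_jury_conditions_iff {ω h α β : ℝ} (hωh : ω * h ≠ 0) (hα : 1 / 2 ≤ α)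
    (hβ : 0 ≤ β) :
    newmarkEigProd ω h α β ≤ 1 ∧ |newmarkEigSum ω h α β| ≤ 1 + newmarkEigProd ω h α β ↔
      ω ^ 2 * h ^ 2 * (α / 2 - β) ≤ 1 := by
  set S := newmarkEigSum ω h α β
  set P := newmarkEigProd ω h α β
  have hk : 0 < ω ^ 2 * h ^ 2 := by rw [← mul_pow]; positivity
  have hD : 0 < 1 + β * ω ^ 2 * h ^ 2 := by positivity
  have hP : 1 - P = ω ^ 2 * h ^ 2 * (α - 1 / 2) / (1 + β * ω ^ 2 * h ^ 2) := by
    simp only [P, newmarkEigProd]; field_simp; ring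
  have hP_sub_S : 1 + P - S = ω ^ 2 * h ^ 2 / (1 + β * ω ^ 2 * h ^ 2) := by
    simp only [S, P, newmarkEigSum, newmarkEigProd]; field_simp; ring
  have hP_add_S :
      1 + P + S = 4 * (1 - ω ^ 2 * h ^ 2 * (α / 2 - β)) / (1 + β * ω ^ 2 * h ^ 2) := by
    simp only [S, P, newmarkEigSum, newmarkEigProd]; field_simp; ring
  rw [abs_le]
  constructor
  · rintro ⟨-, hS, -⟩
    have h₃ : 0 ≤ 1 + P + S := by linarith
    rw [hP_add_S, le_div_iff₀ hD] at h₃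
    linarith
  · intro hstab
    have h₁ : 0 ≤ 1 - P := by rw [hP]; have := sub_nonneg.mpr hα; positivity
    have h₂ : 0 ≤ 1 + P - S := by rw [hP_sub_S]; positivity
    have h₃ : 0 ≤ 1 + P + S := by rw [hP_add_S]; have := sub_nonneg.mpr hstab; positivity
    exact ⟨by linarith, by linarith, by linarith⟩

theorem le_one_div_mul_sqrt_one_div_iff {ω h c : ℝ} (hω : 0 < ω) (hh : 0 ≤ h) (hc : 0 < c) :
    h ≤ 1 / ω * √(1 / c) ↔ ω ^ 2 * h ^ 2 * c ≤ 1 := by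
  rw [one_div_mul_eq_div, le_div_iff₀' hω, Real.le_sqrt (by positivity) (by positivity),
    le_div_iff₀ hc, mul_pow]

/-- For ω > 0, h > 0, α ≥ 1/2, β ≥ 0: every complex eigenvalue of the Newmark
amplification matrix has absolute value at most 1 iff `ω²·h²·(α/2 − β) ≤ 1`;
equivalently, when `β < α/2`, iff `h ≤ (1/ω)·√(1/(α/2 − β))`. -/
theorem newmark_spectral_stability_iff (ω h α β : ℝ)
    (hω : 0 < ω) (hh : 0 < h) (hα : 1 / 2 ≤ α) (hβ : 0 ≤ β) :
    ((∀ μ : ℂ,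
        Module.End.HasEigenvalue
          (Matrix.toLin' ((NewmarkMatrix ω h α β).map Complex.ofReal)) μ →
        ‖μ‖ ≤ 1) ↔
      ω ^ 2 * h ^ 2 * (α / 2 - β) ≤ 1) ∧
    (β < α / 2 →
      ((∀ μ : ℂ,
          Module.End.HasEigenvalue
            (Matrix.toLin' ((NewmarkMatrix ω h α β).map Complex.ofReal)) μ →
          ‖μ‖ ≤ 1) ↔
        h ≤ (1 / ω) * Real.sqrt (1 / (α / 2 - β)))) := by
  have hD : 1 + β * ω ^ 2 * h ^ 2 ≠ 0 := by positivity
  have hstable : (∀ μ : ℂ,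
      Module.End.HasEigenvalue
        (Matrix.toLin' ((NewmarkMatrix ω h α β).map Complex.ofReal)) μ → ‖μ‖ ≤ 1) ↔
      ω ^ 2 * h ^ 2 * (α / 2 - β) ≤ 1 := by
    simp_rw [newmark_hasEigenvalue_iff hD, or_imp, forall_and, forall_eq, norm_zero,
      zero_le_one, true_and, quadratic_roots_norm_le_one_iff]
    exact newmark_jury_conditions_iff (by positivity) hα hβ
  refine ⟨hstable, fun hβα => hstable.trans ?_⟩
  exact (le_one_div_mul_sqrt_one_div_iff hω hh.le (by linarith)).symm
end

section
/- Fix real numbers α and β with α ≥ 1/2 and β ≥ α/2. Then for every ω > 0 and every stepsize h > 0, all complex eigenvalues of the Newmark amplification matrix T_{α,β,ω,h} have absolute value at most 1. That is, the Newmark method with α ≥ 1/2 and β ≥ α/2 is unconditionally (spectrally) stable for the undamped linear oscillator, regardless of the stepsize. -/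
/-!
The nonzero eigenvalues of the amplification matrix are the roots of `μ² − Tμ + C`, where `T` is
its trace and `C` the sum of its principal 2×2 minors (the matrix has rank 2, since `a' = −ω²x'`).
Such roots lie in the closed unit disc as soon as `C ≤ 1` and `p(±1) = 1 ∓ T + C ≥ 0`: non-real
roots form a conjugate pair of modulus `√C`, and real roots `x, y` with `xy = C`,
`(1 − x)(1 − y) ≥ 0` and `(1 + x)(1 + y) ≥ 0` cannot leave `[−1, 1]`. With `s = (ωh)²`,
`C ≤ 1` amounts to `α ≥ 1/2`, while `p(1) = s/(1 + βs)` and `p(−1) = (4 + 2(2β − α)s)/(1 + βs)`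
are nonnegative once `β ≥ α/2`.
-/

open Polynomial

lemma abs_le_one_of_mul_le_one (x y : ℝ) (hxy : x * y ≤ 1) (h₁ : 0 ≤ (1 - x) * (1 - y))
    (h₂ : 0 ≤ (1 + x) * (1 + y)) : |x| ≤ 1 := by
  rw [abs_le]
  constructor <;> by_contra! hx
  · nlinarith
  · nlinarith

lemma norm_le_one_of_sq_sub_mul_add_eq_zero (T C : ℝ) (μ : ℂ)
    (hμ : μ ^ 2 - T * μ + C = 0) (hC : C ≤ 1) (h₁ : 0 ≤ 1 - T + C) (h₂ : 0 ≤ 1 + T + C) :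
    ‖μ‖ ≤ 1 := by
  have hre : μ.re ^ 2 - μ.im ^ 2 - T * μ.re + C = 0 := by
    simpa [sq] using congrArg Complex.re hμ
  have him : μ.im * (2 * μ.re - T) = 0 := by
    have := congrArg Complex.im hμ
    simp only [sq, Complex.sub_im, Complex.add_im, Complex.mul_im, Complex.ofReal_re,
      Complex.ofReal_im, Complex.zero_im] at this
    linear_combination this
  rcases mul_eq_zero.mp him with hreal | hconj
  · -- `μ` is real, and `T - μ` is the other root
    have hμ_re : μ = μ.re := Complex.ext rfl hreal
    rw [hμ_re, Complex.norm_real, Real.norm_eq_abs]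
    apply abs_le_one_of_mul_le_one μ.re (T - μ.re) <;> nlinarith
  · -- non-real roots come in a conjugate pair with product `C`
    have hnormSq : ‖μ‖ ^ 2 = C := by
      rw [Complex.sq_norm, Complex.normSq_apply]; nlinarith
    nlinarith [norm_nonneg μ]

/- Trace and sum of principal 2×2 minors of `NewmarkMatrix ω h α β`, in terms of `s = ω²h²`. -/
noncomputable def newmarkTrace (α β s : ℝ) : ℝ :=
  (2 - (α + 1 / 2 - 2 * β) * s) / (1 + β * s)

noncomputable def newmarkMinorSum (α β s : ℝ) : ℝ :=
  (1 + (1 / 2 - α + β) * s) / (1 + β * s)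

lemma charpoly_newmarkMatrix (ω h α β : ℝ) (hD : 1 + β * (ω ^ 2 * h ^ 2) ≠ 0) :
    (NewmarkMatrix ω h α β).charpoly =
      X * (X ^ 2 - C (newmarkTrace α β (ω ^ 2 * h ^ 2)) * X
        + C (newmarkMinorSum α β (ω ^ 2 * h ^ 2))) := by
  rw [← mul_assoc] at hD
  refine Polynomial.funext fun t => ?_
  rw [Matrix.eval_charpoly, Matrix.det_fin_three]
  simp only [Matrix.scalar_apply, NewmarkMatrix, Matrix.sub_apply, Matrix.diagonal_apply_eq,
    Matrix.diagonal_apply_ne, Matrix.of_apply, Matrix.cons_val', Matrix.cons_val_zero,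
    Matrix.cons_val_fin_one, Matrix.cons_val_one, Matrix.cons_val, ne_eq, Fin.reduceEq,
    not_false_eq_true, newmarkTrace, newmarkMinorSum, ← mul_assoc, eval_mul, eval_X, eval_add,
    eval_sub, eval_pow, eval_C]
  field_simp
  ring

section
variable {α β s : ℝ}

lemma newmarkMinorSum_le_one (hβ : 0 ≤ β) (hs : 0 ≤ s) (hα : 1 / 2 ≤ α) :
    newmarkMinorSum α β s ≤ 1 := by
  rw [newmarkMinorSum, div_le_one (by positivity)]
  nlinarith

lemma one_sub_newmarkTrace_add_newmarkMinorSum_nonneg (hβ : 0 ≤ β) (hs : 0 ≤ s) :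
    0 ≤ 1 - newmarkTrace α β s + newmarkMinorSum α β s := by
  have hD : 0 < 1 + β * s := by positivity
  have hvalue : 1 - newmarkTrace α β s + newmarkMinorSum α β s = s / (1 + β * s) := by
    rw [newmarkTrace, newmarkMinorSum]; field_simp; ring
  rw [hvalue]; positivity

lemma one_add_newmarkTrace_add_newmarkMinorSum_nonneg (hβ : 0 ≤ β) (hs : 0 ≤ s)
    (hαβ : α / 2 ≤ β) :
    0 ≤ 1 + newmarkTrace α β s + newmarkMinorSum α β s := by
  have hD : 0 < 1 + β * s := by positivity
  have hvalue : 1 + newmarkTrace α β s + newmarkMinorSum α β s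
      = (4 + 2 * (2 * β - α) * s) / (1 + β * s) := by
    rw [newmarkTrace, newmarkMinorSum]; field_simp; ring
  have hcoef : 0 ≤ 2 * β - α := by linarith
  rw [hvalue]; positivity

end

/-- If α ≥ 1/2 and β ≥ α/2, then for every ω > 0 and every stepsize h > 0 all
complex eigenvalues of the Newmark amplification matrix have absolute value at
most 1: the Newmark method is unconditionally (spectrally) stable for the
undamped linear oscillator. -/
theorem newmark_unconditional_stability (α β : ℝ)
    (hα : 1 / 2 ≤ α) (hβ : α / 2 ≤ β) :
    ∀ ω h : ℝ, 0 < ω → 0 < h →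
      ∀ μ : ℂ,
        Module.End.HasEigenvalue
          (Matrix.toLin' ((NewmarkMatrix ω h α β).map Complex.ofReal)) μ →
        ‖μ‖ ≤ 1 := by
  intro ω h _ _ μ hμ
  set s := ω ^ 2 * h ^ 2
  have hβ₀ : 0 ≤ β := by linarith
  have hs : 0 ≤ s := by positivity
  have hroot : μ * (μ ^ 2 - newmarkTrace α β s * μ + newmarkMinorSum α β s) = 0 := by
    have hmap : ((NewmarkMatrix ω h α β).map Complex.ofReal).charpoly =
        (NewmarkMatrix ω h α β).charpoly.map Complex.ofRealHom :=
      Matrix.charpoly_map _ Complex.ofRealHom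
    rw [Module.End.hasEigenvalue_iff_isRoot_charpoly, Matrix.charpoly_toLin', hmap,
      charpoly_newmarkMatrix ω h α β (by positivity)] at hμ
    simpa using hμ
  rcases mul_eq_zero.mp hroot with rfl | hquad
  · simp
  · exact norm_le_one_of_sq_sub_mul_add_eq_zero _ _ μ hquad (newmarkMinorSum_le_one hβ₀ hs hα)
      (one_sub_newmarkTrace_add_newmarkMinorSum_nonneg hβ₀ hs)
      (one_add_newmarkTrace_add_newmarkMinorSum_nonneg hβ₀ hs hβ)
end

section
/- Fix real numbers ω > 0, h > 0, and β ≥ 0, and take α = 1/2 in the Newmark method. If ω²·h²·(1/4 − β) < 1, then the two nonzero complex eigenvalues of the Newmark amplification matrix T_{1/2,β,ω,h} are non-real complex conjugates of absolute value exactly 1. In particular, within its stability range the Newmark method with α = 1/2 (e.g. the trapezoidal rule β = 1/4 or Fox–Goodwin β = 1/12) introduces no numerical damping. -/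
open Polynomial

theorem Matrix.hasEigenvalue_toLin'_map_iff {n K L : Type*} [Fintype n] [DecidableEq n]
    [Field K] [Field L] (f : K →+* L) (M : Matrix n n K) (ν : L) :
    Module.End.HasEigenvalue (Matrix.toLin' (M.map f)) ν ↔ (M.charpoly.map f).IsRoot ν := by
  rw [Module.End.hasEigenvalue_iff_isRoot_charpoly, Matrix.charpoly_toLin', Matrix.charpoly_map]

theorem newmarkMatrix_charpoly (ω h α β : ℝ) (hD : 1 + β * ω ^ 2 * h ^ 2 ≠ 0) :
    (NewmarkMatrix ω h α β).charpoly =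
      X * (X ^ 2 - C (2 - (α + 1 / 2) * ω ^ 2 * h ^ 2 / (1 + β * ω ^ 2 * h ^ 2)) * X
        + C (1 - (α - 1 / 2) * ω ^ 2 * h ^ 2 / (1 + β * ω ^ 2 * h ^ 2))) := by
  refine Polynomial.funext fun t => ?_
  rw [Matrix.eval_charpoly, Matrix.det_fin_three]
  simp [NewmarkMatrix, Matrix.scalar_apply]
  field_simp
  ring

theorem abs_two_sub_div_one_add_mul_lt_two {s β : ℝ} (hs : 0 < s)
    (hstab : s * (1 / 4 - β) < 1) : |2 - s / (1 + β * s)| < 2 := by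
  have hD : 0 < 1 + β * s := by nlinarith
  rw [abs_lt]
  constructor
  · rw [lt_sub_comm, div_lt_iff₀ hD]
    nlinarith
  · linarith [div_pos hs hD]

theorem Complex.exists_norm_eq_one_two_mul_re_eq {τ : ℝ} (hτ : |τ| < 2) :
    ∃ μ : ℂ, ‖μ‖ = 1 ∧ 2 * μ.re = τ ∧ μ.im ≠ 0 := by
  obtain ⟨hlo, hhi⟩ := abs_lt.1 hτ
  refine ⟨Complex.exp (Real.arccos (τ / 2) * Complex.I), Complex.norm_exp_ofReal_mul_I _, ?_, ?_⟩
  · rw [Complex.exp_ofReal_mul_I_re, Real.cos_arccos (by linarith) (by linarith)]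
    ring
  · rw [Complex.exp_ofReal_mul_I_im]
    exact (Real.sin_pos_of_pos_of_lt_pi (Real.arccos_pos.2 (by linarith))
      (Real.arccos_lt_pi.2 (by linarith))).ne'

theorem Complex.sq_sub_mul_add_one_eq {μ : ℂ} {τ : ℝ} (hμ : ‖μ‖ = 1) (hre : 2 * μ.re = τ)
    (ν : ℂ) : ν ^ 2 - τ * ν + 1 = (ν - μ) * (ν - starRingEnd ℂ μ) := by
  have hsum : μ + starRingEnd ℂ μ = τ := by rw [Complex.add_conj, hre]
  have hprod : μ * starRingEnd ℂ μ = 1 := by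
    rw [Complex.mul_conj, Complex.normSq_eq_norm_sq, hμ]
    simp
  linear_combination ν * hsum - hprod

theorem newmark_alpha_half_no_damping_general (ω h β : ℝ)
    (hω : 0 < ω) (hh : 0 < h)
    (hstab : ω ^ 2 * h ^ 2 * (1 / 4 - β) < 1) :
    ∃ μ : ℂ, μ.im ≠ 0 ∧ ‖μ‖ = 1 ∧
      Module.End.HasEigenvalue
        (Matrix.toLin' ((NewmarkMatrix ω h (1 / 2) β).map Complex.ofReal)) μ ∧
      Module.End.HasEigenvalue
        (Matrix.toLin' ((NewmarkMatrix ω h (1 / 2) β).map Complex.ofReal))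
        ((starRingEnd ℂ) μ) ∧
      ∀ ν : ℂ,
        Module.End.HasEigenvalue
          (Matrix.toLin' ((NewmarkMatrix ω h (1 / 2) β).map Complex.ofReal)) ν →
        ν = 0 ∨ ν = μ ∨ ν = (starRingEnd ℂ) μ := by
  have hs : 0 < ω ^ 2 * h ^ 2 := by positivity
  have hD : 1 + β * ω ^ 2 * h ^ 2 ≠ 0 := by nlinarith
  have hτ : |2 - (1 / 2 + 1 / 2) * ω ^ 2 * h ^ 2 / (1 + β * ω ^ 2 * h ^ 2)| < 2 := by
    norm_num [mul_assoc]
    exact abs_two_sub_div_one_add_mul_lt_two hs hstab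
  obtain ⟨μ, hμ, hμre, hμim⟩ := Complex.exists_norm_eq_one_two_mul_re_eq hτ
  have hEig : ∀ ν, Module.End.HasEigenvalue
      (Matrix.toLin' ((NewmarkMatrix ω h (1 / 2) β).map Complex.ofReal)) ν ↔
      ν * ((ν - μ) * (ν - starRingEnd ℂ μ)) = 0 := by
    intro ν
    refine (Matrix.hasEigenvalue_toLin'_map_iff Complex.ofRealHom _ ν).trans ?_
    rw [newmarkMatrix_charpoly _ _ _ _ hD, ← Complex.sq_sub_mul_add_one_eq hμ hμre]
    simp
  refine ⟨μ, hμim, hμ, (hEig μ).2 (by simp), (hEig _).2 (by simp), fun ν hν => ?_⟩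
  simpa only [mul_eq_zero, sub_eq_zero] using (hEig ν).1 hν

/-- For α = 1/2 and β ≥ 0, if `ω²·h²·(1/4 − β) < 1` then the two nonzero
complex eigenvalues of the Newmark amplification matrix are non-real complex
conjugates of absolute value exactly 1: within its stability range, the
Newmark method with α = 1/2 introduces no numerical damping. -/
theorem newmark_alpha_half_no_damping (ω h β : ℝ)
    (hω : 0 < ω) (hh : 0 < h) (hβ : 0 ≤ β)
    (hstab : ω ^ 2 * h ^ 2 * (1 / 4 - β) < 1) :
    ∃ μ : ℂ, μ.im ≠ 0 ∧ ‖μ‖ = 1 ∧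
      Module.End.HasEigenvalue
        (Matrix.toLin' ((NewmarkMatrix ω h (1 / 2) β).map Complex.ofReal)) μ ∧
      Module.End.HasEigenvalue
        (Matrix.toLin' ((NewmarkMatrix ω h (1 / 2) β).map Complex.ofReal))
        ((starRingEnd ℂ) μ) ∧
      ∀ ν : ℂ,
        Module.End.HasEigenvalue
          (Matrix.toLin' ((NewmarkMatrix ω h (1 / 2) β).map Complex.ofReal)) ν →
        ν = 0 ∨ ν = μ ∨ ν = (starRingEnd ℂ) μ :=
  newmark_alpha_half_no_damping_general ω h β hω hh hstab
end

section
/- Let M and K be real n×n matrices with M symmetric positive definite and K symmetric positive semidefinite, let α ≥ 1/2, β ≥ 0, and h > 0. The Newmark update for the linear system M·ẍ + K·x = 0, which sends (x, v, a) ∈ ℝⁿ × ℝⁿ × ℝⁿ to the unique (x', v', a') satisfying x' = x + h·v + h²·((1/2 − β)·a + β·a'), v' = v + h·((1 − α)·a + α·a'), and M·a' = −K·x', is a well-defined linear map on ℝ^{3n}, and all of its complex eigenvalues have absolute value at most 1 if and only if h²·(α/2 − β)·μ ≤ 1 for every eigenvalue μ of the generalized eigenvalue problem K·φ = μ·M·φ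 (equivalently, every eigenvalue μ of M⁻¹·K). Equivalently, writing ω_max for the largest natural frequency (ω_max² the largest such μ), spectral stability holds if and only if h·ω_max·√(α/2 − β) ≤ 1 (automatic when β ≥ α/2). -/
/-!
Under `ℂ ⊗[ℝ] (ℝⁿ)³ ≃ (ℂⁿ)³` the complexified update still satisfies the Newmark relations.
If it maps `(x, v, a) ≠ 0` to `μ • (x, v, a)` with `μ ≠ 0, 1`, eliminating `v` gives
`(μ - 1)² x = h² c(μ) a`; together with `M a = -K x` this makes `x` a generalized eigenvector of
the pencil `(K, M)`, whose eigenvalue is a real `ω² ≥ 0` with a real eigenvector. Then `μ` is a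
root of `p(μ) = (1 + βκ) μ² + (κ (α + 1/2 - 2β) - 2) μ + 1 + κ (1/2 + β - α)`, `κ = h² ω²`.
For `α ≥ 1/2`, `β ≥ 0` and `κ (α/2 - β) ≤ 1` the real quadratic `p` satisfies the Schur–Cohn
conditions `p(1) ≥ 0`, `p(-1) ≥ 0`, `p(0) ≤ 1 + βκ`, so its roots lie in the closed unit disk.
If `κ (α/2 - β) > 1` then `p(-1) < 0` gives a real root `r < -1`, and a mode `(φ, s φ, -ω² φ)`
is mapped to `r` times itself by the update, which is unique since `M + h² β K` is positive
definite.
-/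

open Matrix TensorProduct

section NewmarkStep

variable {ι S : Type*} [CommRing S] [Algebra ℝ S]

noncomputable def newmarkPredictor (β h : ℝ) (p : (ι → S) × (ι → S) × (ι → S)) : ι → S :=
  p.1 + h • p.2.1 + (h ^ 2 * (1 / 2 - β)) • p.2.2

variable [Fintype ι]

def IsNewmarkStep (M K : Matrix ι ι S) (α β h : ℝ) (p q : (ι → S) × (ι → S) × (ι → S)) :
    Prop :=
  q.1 = p.1 + h • p.2.1 + h ^ 2 • ((1 / 2 - β) • p.2.2 + β • q.2.2) ∧
  q.2.1 = p.2.1 + h • ((1 - α) • p.2.2 + α • q.2.2) ∧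
  M *ᵥ q.2.2 = -(K *ᵥ q.1)

variable {M K : Matrix ι ι S} {α β h : ℝ}

lemma isNewmarkStep_zero : IsNewmarkStep M K α β h 0 0 := by
  simp [IsNewmarkStep]

lemma IsNewmarkStep.add {p q p' q'} (hpq : IsNewmarkStep M K α β h p q)
    (hpq' : IsNewmarkStep M K α β h p' q') : IsNewmarkStep M K α β h (p + p') (q + q') := by
  obtain ⟨h1, h2, h3⟩ := hpq
  obtain ⟨h1', h2', h3'⟩ := hpq'
  refine ⟨?_, ?_, ?_⟩
  · simp only [Prod.fst_add, Prod.snd_add]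
    linear_combination (norm := module) h1 + h1'
  · simp only [Prod.fst_add, Prod.snd_add]
    linear_combination (norm := module) h2 + h2'
  · simp only [Prod.fst_add, Prod.snd_add, mulVec_add, h3, h3', neg_add]

lemma isNewmarkStep_iff {p q : (ι → S) × (ι → S) × (ι → S)} :
    IsNewmarkStep M K α β h p q ↔
      q.1 = newmarkPredictor β h p + (h ^ 2 * β) • q.2.2 ∧
      q.2.1 = p.2.1 + h • ((1 - α) • p.2.2 + α • q.2.2) ∧
      (M + (h ^ 2 * β) • K) *ᵥ q.2.2 = -(K *ᵥ newmarkPredictor β h p) := by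
  constructor
  · rintro ⟨h1, h2, h3⟩
    have h1' : q.1 = newmarkPredictor β h p + (h ^ 2 * β) • q.2.2 := by
      rw [h1, newmarkPredictor]; module
    refine ⟨h1', h2, ?_⟩
    rw [add_mulVec, smul_mulVec, h3, h1', mulVec_add, mulVec_smul]
    abel
  · rintro ⟨h1, h2, h3⟩
    refine ⟨by rw [h1, newmarkPredictor]; module, h2, ?_⟩
    rw [add_mulVec, smul_mulVec] at h3
    rw [h1, mulVec_add, mulVec_smul]
    linear_combination (norm := module) h3

lemma Matrix.map_algebraMap_mulVec_smul (A : Matrix ι ι ℝ) (v : ι → ℝ) (c : S) :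
    A.map (algebraMap ℝ S) *ᵥ (fun j => v j • c) = fun i => (A *ᵥ v) i • c := by
  ext i
  simp [mulVec, dotProduct, Algebra.smul_def, Finset.sum_mul, mul_assoc]

end NewmarkStep

section BaseChange

variable (S ι : Type*) [CommRing S] [Algebra ℝ S] [Fintype ι] [DecidableEq ι]

noncomputable def baseChangeTripleEquiv :
    S ⊗[ℝ] ((ι → ℝ) × (ι → ℝ) × (ι → ℝ)) ≃ₗ[S] (ι → S) × (ι → S) × (ι → S) :=
  prodRight ℝ S S _ _ ≪≫ₗ (piScalarRight ℝ S S ι).prodCongr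
    (prodRight ℝ S S _ _ ≪≫ₗ (piScalarRight ℝ S S ι).prodCongr (piScalarRight ℝ S S ι))

variable {S ι}

@[simp]
lemma baseChangeTripleEquiv_tmul (c : S) (p : (ι → ℝ) × (ι → ℝ) × (ι → ℝ)) :
    baseChangeTripleEquiv S ι (c ⊗ₜ p) =
      (fun j => p.1 j • c, fun j => p.2.1 j • c, fun j => p.2.2 j • c) := by
  simp [baseChangeTripleEquiv]

variable {M K : Matrix ι ι ℝ} {α β h : ℝ} {L : Module.End ℝ ((ι → ℝ) × (ι → ℝ) × (ι → ℝ))}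

lemma IsNewmarkStep.baseChange_tmul {p q} (hpq : IsNewmarkStep M K α β h p q) (c : S) :
    IsNewmarkStep (M.map (algebraMap ℝ S)) (K.map (algebraMap ℝ S)) α β h
      (baseChangeTripleEquiv S ι (c ⊗ₜ p)) (baseChangeTripleEquiv S ι (c ⊗ₜ q)) := by
  obtain ⟨h1, h2, h3⟩ := hpq
  simp only [baseChangeTripleEquiv_tmul, IsNewmarkStep, Matrix.map_algebraMap_mulVec_smul, h3]
  refine ⟨?_, ?_, ?_⟩
  · ext j; simp [h1, add_smul, smul_add, smul_smul]
  · ext j; simp [h2, add_smul, smul_add, smul_smul]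
  · ext j; simp [neg_smul]

lemma isNewmarkStep_baseChange (hL : ∀ p, IsNewmarkStep M K α β h p (L p))
    (z : S ⊗[ℝ] ((ι → ℝ) × (ι → ℝ) × (ι → ℝ))) :
    IsNewmarkStep (M.map (algebraMap ℝ S)) (K.map (algebraMap ℝ S)) α β h
      (baseChangeTripleEquiv S ι z) (baseChangeTripleEquiv S ι (L.baseChange S z)) := by
  induction z using TensorProduct.induction_on with
  | zero => simpa using isNewmarkStep_zero
  | tmul c p => simpa only [LinearMap.baseChange_tmul] using (hL p).baseChange_tmul c
  | add z z' hz hz' => simpa only [map_add] using hz.add hz'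

lemma exists_isNewmarkStep_smul_of_hasEigenvalue (hL : ∀ p, IsNewmarkStep M K α β h p (L p))
    {μ : S} (hμ : Module.End.HasEigenvalue (L.baseChange S) μ) :
    ∃ p ≠ 0, IsNewmarkStep (M.map (algebraMap ℝ S)) (K.map (algebraMap ℝ S)) α β h p (μ • p) := by
  obtain ⟨z, hz, hz0⟩ := hμ.exists_hasEigenvector
  refine ⟨baseChangeTripleEquiv S ι z, by simpa using hz0, ?_⟩
  rw [← map_smul, ← Module.End.mem_eigenspace_iff.mp hz]
  exact isNewmarkStep_baseChange hL z

end BaseChange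

lemma Module.End.HasEigenvalue.baseChange {K V A : Type*} [Field K] [AddCommGroup V]
    [Module K V] [CommRing A] [Algebra K A] [Nontrivial A] {f : Module.End K V} {r : K}
    (hr : f.HasEigenvalue r) : Module.End.HasEigenvalue (f.baseChange A) (algebraMap K A r) := by
  obtain ⟨v, hv, hv0⟩ := hr.exists_hasEigenvector
  refine Module.End.hasEigenvalue_of_hasEigenvector (x := (1 : A) ⊗ₜ v) ⟨?_, by simpa using hv0⟩
  rw [Module.End.mem_eigenspace_iff, LinearMap.baseChange_tmul,
    Module.End.mem_eigenspace_iff.mp hv, tmul_smul, algebraMap_smul]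

lemma Matrix.IsSymm.dotProduct_mulVec_comm {ι R : Type*} [Fintype ι] [CommSemiring R]
    {A : Matrix ι ι R} (hA : A.IsSymm) (u w : ι → R) : u ⬝ᵥ (A *ᵥ w) = w ⬝ᵥ (A *ᵥ u) := by
  rw [dotProduct_mulVec, ← mulVec_transpose, hA.eq, dotProduct_comm]

section Quadratic

lemma norm_le_one_of_quadratic_eq_zero {d b c : ℝ} (hd : 0 < d) (hone : 0 ≤ d + b + c)
    (hnegone : 0 ≤ d - b + c) (hcd : c ≤ d) {z : ℂ} (hz : d * z ^ 2 + b * z + c = 0) :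
    ‖z‖ ≤ 1 := by
  by_cases him : z.im = 0
  · obtain ⟨r, rfl⟩ : ∃ r : ℝ, (r : ℂ) = z := ⟨z.re, Complex.ext rfl him.symm⟩
    have hr : d * r ^ 2 + b * r + c = 0 := by exact_mod_cast hz
    rw [Complex.norm_real, Real.norm_eq_abs, abs_le]
    constructor <;> by_contra! hlt
    · nlinarith [mul_nonneg hnegone (show (0 : ℝ) ≤ -r by linarith),
        mul_pos hd (show 0 < -(r + 1) by linarith)]
    · nlinarith [mul_nonneg hone (show (0 : ℝ) ≤ r by linarith),
        mul_pos hd (show 0 < r - 1 by linarith)]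
  · -- the conjugate is the other root, so `c / d` is the product `‖z‖ ^ 2`
    have hz' : d * (starRingEnd ℂ z) ^ 2 + b * (starRingEnd ℂ z) + c = 0 := by
      simpa using congrArg (starRingEnd ℂ) hz
    have hsub : z - starRingEnd ℂ z ≠ 0 := by
      rw [Complex.sub_conj]; simpa using him
    have hsum : d * (z + starRingEnd ℂ z) + b = 0 :=
      (mul_eq_zero.mp (by linear_combination hz - hz' :
        (z - starRingEnd ℂ z) * (d * (z + starRingEnd ℂ z) + b) = 0)).resolve_left hsub
    have hprod : (c : ℂ) = d * Complex.normSq z := by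
      rw [← Complex.mul_conj]; linear_combination hz - z * hsum
    have hnormSq : c = d * Complex.normSq z := by exact_mod_cast hprod
    rw [← sq_le_one_iff₀ (norm_nonneg z), ← Complex.normSq_eq_norm_sq]
    nlinarith

lemma exists_quadratic_root_lt {d b c t : ℝ} (hd : 0 < d) (ht : d * t ^ 2 + b * t + c < 0) :
    ∃ r < t, d * r ^ 2 + b * r + c = 0 := by
  have hdisc : 0 < b ^ 2 - 4 * d * c := by nlinarith [sq_nonneg (2 * d * t + b)]
  set s := √(b ^ 2 - 4 * d * c)
  have hs : s ^ 2 = b ^ 2 - 4 * d * c := Real.sq_sqrt hdisc.le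
  refine ⟨(-b - s) / (2 * d), ?_, ?_⟩
  · rw [div_lt_iff₀ (by linarith)]
    nlinarith [Real.sqrt_nonneg (b ^ 2 - 4 * d * c)]
  · field_simp
    linear_combination hs

/-- `newmarkChar α β κ μ = 0` says that `μ` is an amplification factor of the Newmark step for a
single mode with `h² ω² = κ`. -/
def newmarkChar {𝕜 : Type*} [Field 𝕜] (α β κ μ : 𝕜) : 𝕜 :=
  (μ - 1) ^ 2 + κ * ((1 - α) + α * μ + (μ - 1) * ((1 / 2 - β) + β * μ))

lemma norm_le_one_of_newmarkChar_eq_zero {α β κ : ℝ} (hα : 1 / 2 ≤ α) (hβ : 0 ≤ β)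
    (hκ : 0 ≤ κ) (hcond : κ * (α / 2 - β) ≤ 1) {μ : ℂ} (hμ : newmarkChar (α : ℂ) β κ μ = 0) :
    ‖μ‖ ≤ 1 := by
  refine norm_le_one_of_quadratic_eq_zero (d := 1 + β * κ) (b := κ * (α + 1 / 2 - 2 * β) - 2)
    (c := 1 + κ * (1 / 2 + β - α)) (by positivity) (by nlinarith) (by nlinarith)
    (by nlinarith) ?_
  unfold newmarkChar at hμ
  push_cast
  linear_combination hμ

lemma exists_newmarkChar_eq_zero_lt_neg_one {α β κ : ℝ} (hβ : 0 ≤ β) (hκ : 0 ≤ κ)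
    (hunstable : 1 < κ * (α / 2 - β)) : ∃ r < -1, newmarkChar α β κ r = 0 := by
  obtain ⟨r, hr, hroot⟩ := exists_quadratic_root_lt (d := 1 + β * κ)
    (b := κ * (α + 1 / 2 - 2 * β) - 2) (c := 1 + κ * (1 / 2 + β - α)) (t := -1) (by positivity)
    (by nlinarith)
  exact ⟨r, hr, by unfold newmarkChar; linear_combination hroot⟩

end Quadratic

section GeneralizedEigen

variable {ι : Type*} [Fintype ι] {M K : Matrix ι ι ℝ}

lemma genEigenvalue_nonneg (hM : M.PosDef) (hK : K.PosSemidef) {μ : ℝ} {φ : ι → ℝ}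
    (hφ : φ ≠ 0) (he : K *ᵥ φ = μ • M *ᵥ φ) : 0 ≤ μ := by
  have hKφ : 0 ≤ φ ⬝ᵥ (K *ᵥ φ) := by simpa using hK.dotProduct_mulVec_nonneg φ
  have hMφ : 0 < φ ⬝ᵥ (M *ᵥ φ) := by simpa using hM.dotProduct_mulVec_pos hφ
  rw [he, dotProduct_smul, smul_eq_mul] at hKφ
  exact nonneg_of_mul_nonneg_left hKφ hMφ

lemma re_map_algebraMap_mulVec (A : Matrix ι ι ℝ) (x : ι → ℂ) :
    (fun i => (A.map (algebraMap ℝ ℂ) *ᵥ x) i |>.re) = A *ᵥ fun j => (x j).re := by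
  ext i
  simp [mulVec, dotProduct, Complex.re_sum]

lemma im_map_algebraMap_mulVec (A : Matrix ι ι ℝ) (x : ι → ℂ) :
    (fun i => (A.map (algebraMap ℝ ℂ) *ᵥ x) i |>.im) = A *ᵥ fun j => (x j).im := by
  ext i
  simp [mulVec, dotProduct, Complex.im_sum]

lemma exists_real_genEigenvector (hM : M.PosDef) (hK : K.IsSymm) {x : ι → ℂ} (hx : x ≠ 0)
    {γ : ℂ} (he : K.map (algebraMap ℝ ℂ) *ᵥ x = γ • M.map (algebraMap ℝ ℂ) *ᵥ x) :
    ∃ μ : ℝ, γ = μ ∧ ∃ φ ≠ 0, K *ᵥ φ = μ • M *ᵥ φ := by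
  set y : ι → ℝ := fun j => (x j).re
  set z : ι → ℝ := fun j => (x j).im
  have hre : K *ᵥ y = γ.re • M *ᵥ y - γ.im • M *ᵥ z := by
    rw [← re_map_algebraMap_mulVec, ← re_map_algebraMap_mulVec, ← im_map_algebraMap_mulVec, he]
    ext i; simp
  have him : K *ᵥ z = γ.im • M *ᵥ y + γ.re • M *ᵥ z := by
    rw [← im_map_algebraMap_mulVec, ← re_map_algebraMap_mulVec, ← im_map_algebraMap_mulVec, he]
    ext i; simp; ring
  have hyz : y ≠ 0 ∨ z ≠ 0 := by
    by_contra! h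
    exact hx (funext fun j => Complex.ext (congrFun h.1 j) (congrFun h.2 j))
  have hpos : 0 < y ⬝ᵥ (M *ᵥ y) + z ⬝ᵥ (M *ᵥ z) := by
    have := hM.posSemidef.dotProduct_mulVec_nonneg
    rcases hyz with hy | hz
    · exact add_pos_of_pos_of_nonneg (hM.dotProduct_mulVec_pos hy) (by simpa using this z)
    · exact add_pos_of_nonneg_of_pos (by simpa using this y) (hM.dotProduct_mulVec_pos hz)
  -- pairing `hre` with `z` and `him` with `y`, symmetry leaves `γ.im (yᵀMy + zᵀMz) = 0`
  have himγ : γ.im = 0 := by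
    have h1 := congrArg (z ⬝ᵥ ·) hre
    have h2 := congrArg (y ⬝ᵥ ·) him
    simp only [dotProduct_sub, dotProduct_add, dotProduct_smul, smul_eq_mul] at h1 h2
    rw [hK.dotProduct_mulVec_comm z y,
      (isHermitian_iff_isSymm.1 hM.isHermitian).dotProduct_mulVec_comm z y] at h1
    nlinarith
  refine ⟨γ.re, Complex.ext rfl (by simpa using himγ), ?_⟩
  rcases hyz with hy | hz
  · exact ⟨y, hy, by simpa [himγ] using hre⟩
  · exact ⟨z, hz, by simpa [himγ] using him⟩

end GeneralizedEigen

section Stability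

variable {ι : Type*} [Fintype ι] {M K : Matrix ι ι ℝ} {α β h : ℝ}
  {L : Module.End ℝ ((ι → ℝ) × (ι → ℝ) × (ι → ℝ))}

lemma existsUnique_isNewmarkStep (hM : M.PosDef) (hK : K.PosSemidef) (hβ : 0 ≤ β)
    (p : (ι → ℝ) × (ι → ℝ) × (ι → ℝ)) : ∃! q, IsNewmarkStep M K α β h p q := by
  classical
  have hN : IsUnit (M + (h ^ 2 * β) • K) :=
    (hM.add_posSemidef (hK.smul (by positivity))).isUnit
  obtain ⟨a', ha', ha'_unique⟩ := Function.Bijective.existsUnique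
    ⟨mulVec_injective_iff_isUnit.2 hN, mulVec_surjective_iff_isUnit.2 hN⟩
    (-(K *ᵥ newmarkPredictor β h p))
  refine ⟨(newmarkPredictor β h p + (h ^ 2 * β) • a', p.2.1 + h • ((1 - α) • p.2.2 + α • a'), a'),
    isNewmarkStep_iff.2 ⟨rfl, rfl, ha'⟩, fun q hq => ?_⟩
  obtain ⟨h1, h2, h3⟩ := isNewmarkStep_iff.1 hq
  obtain rfl := ha'_unique _ h3
  exact Prod.ext h1 (Prod.ext h2 rfl)

lemma eq_one_or_exists_genEigen_of_isNewmarkStep_smul (hM : M.PosDef) (hh : h ≠ 0)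
    {p : (ι → ℂ) × (ι → ℂ) × (ι → ℂ)} (hp : p ≠ 0) {μ : ℂ} (hμ : μ ≠ 0)
    (hstep : IsNewmarkStep (M.map (algebraMap ℝ ℂ)) (K.map (algebraMap ℝ ℂ)) α β h p (μ • p)) :
    μ = 1 ∨ ∃ γ : ℂ,
      (∃ x ≠ 0, K.map (algebraMap ℝ ℂ) *ᵥ x = γ • M.map (algebraMap ℝ ℂ) *ᵥ x) ∧
      newmarkChar (α : ℂ) β (h ^ 2 * γ) μ = 0 := by
  obtain ⟨x, v, a⟩ := p
  obtain ⟨hx', hv', ha'⟩ := hstep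
  simp only [Prod.smul_fst, Prod.smul_snd] at hx' hv' ha'
  have hMa : M.map (algebraMap ℝ ℂ) *ᵥ a = -(K.map (algebraMap ℝ ℂ) *ᵥ x) := by
    rw [mulVec_smul, mulVec_smul, ← smul_neg] at ha'
    exact smul_right_injective _ hμ ha'
  have hv : (μ - 1) • v = ((h : ℂ) * ((1 - α) + α * μ)) • a := by
    linear_combination (norm := module) hv'
  set c : ℂ := (1 - α) + α * μ + (μ - 1) * ((1 / 2 - β) + β * μ)
  have hx : (μ - 1) ^ 2 • x = ((h : ℂ) ^ 2 * c) • a := by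
    linear_combination (norm := module) (μ - 1) • hx' + (h : ℂ) • hv
  by_cases hx0 : x = 0
  · left
    classical
    have ha0 : a = 0 := by
      refine mulVec_injective_iff_isUnit.2 (hM.isUnit.map (algebraMap ℝ ℂ).mapMatrix) ?_
      simp only [RingHom.mapMatrix_apply, hMa, hx0, mulVec_zero, neg_zero]
    have hv0 : v ≠ 0 := by
      rintro rfl
      exact hp (by simp [hx0, ha0])
    rw [ha0, smul_zero, smul_eq_zero] at hv
    exact sub_eq_zero.1 (hv.resolve_right hv0)
  by_cases hc0 : c = 0
  · left
    rw [hc0, mul_zero, zero_smul, smul_eq_zero] at hx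
    exact sub_eq_zero.1 (pow_eq_zero_iff two_ne_zero |>.1 (hx.resolve_right hx0))
  right
  have hh' : (h : ℂ) ≠ 0 := by exact_mod_cast hh
  have hh2c : (h : ℂ) ^ 2 * c ≠ 0 := by simp [hh', hc0]
  refine ⟨-(μ - 1) ^ 2 / ((h : ℂ) ^ 2 * c), ⟨x, hx0, ?_⟩, ?_⟩
  · have ha : a = ((μ - 1) ^ 2 / ((h : ℂ) ^ 2 * c)) • x := by
      rw [div_eq_inv_mul, mul_smul, hx, inv_smul_smul₀ hh2c]
    rw [← neg_neg (K.map (algebraMap ℝ ℂ) *ᵥ x), ← hMa, ha, mulVec_smul, neg_div,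
      neg_smul]
  · change (μ - 1) ^ 2 + (h : ℂ) ^ 2 * (-(μ - 1) ^ 2 / ((h : ℂ) ^ 2 * c)) * c = 0
    field_simp
    ring

lemma exists_isNewmarkStep_smul_of_genEigen (hh : h ≠ 0) {μ r : ℝ} {φ : ι → ℝ}
    (hφ : K *ᵥ φ = μ • M *ᵥ φ) (hr : newmarkChar α β (h ^ 2 * μ) r = 0) :
    ∃ v a, IsNewmarkStep M K α β h (φ, v, a) (r • (φ, v, a)) := by
  obtain ⟨s, hs⟩ : ∃ s, h * s = r - 1 + h ^ 2 * μ * ((1 / 2 - β) + β * r) :=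
    ⟨_, mul_div_cancel₀ _ hh⟩
  have hs' : (r - 1) * s = -(h * μ * ((1 - α) + α * r)) :=
    mul_left_cancel₀ hh (by unfold newmarkChar at hr; linear_combination (r - 1) * hs + hr)
  refine ⟨s • φ, (-μ) • φ, ?_, ?_, ?_⟩
  · simp only [Prod.smul_fst, Prod.smul_snd]
    linear_combination (norm := module) -(hs • φ)
  · simp only [Prod.smul_fst, Prod.smul_snd]
    linear_combination (norm := module) hs' • φ
  · simp only [Prod.smul_fst, Prod.smul_snd, mulVec_smul, hφ, smul_smul]
    module

lemma norm_le_one_of_hasEigenvalue_baseChange (hM : M.PosDef) (hK : K.PosSemidef)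
    (hα : 1 / 2 ≤ α) (hβ : 0 ≤ β) (hh : 0 < h) (hL : ∀ p, IsNewmarkStep M K α β h p (L p))
    (hcond : ∀ μ : ℝ, (∃ φ : ι → ℝ, φ ≠ 0 ∧ K *ᵥ φ = μ • M *ᵥ φ) →
      h ^ 2 * (α / 2 - β) * μ ≤ 1)
    {μ : ℂ} (hμ : Module.End.HasEigenvalue (L.baseChange ℂ) μ) : ‖μ‖ ≤ 1 := by
  classical
  obtain ⟨p, hp, hstep⟩ := exists_isNewmarkStep_smul_of_hasEigenvalue hL hμ
  rcases eq_or_ne μ 0 with rfl | hμ0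
  · simp
  rcases eq_one_or_exists_genEigen_of_isNewmarkStep_smul hM hh.ne' hp hμ0 hstep with
    rfl | ⟨γ, ⟨x, hx, hγ⟩, hchar⟩
  · simp
  obtain ⟨μr, rfl, φ, hφ, hφμ⟩ :=
    exists_real_genEigenvector hM (isHermitian_iff_isSymm.1 hK.isHermitian) hx hγ
  have hκ : 0 ≤ h ^ 2 * μr := mul_nonneg (sq_nonneg h) (genEigenvalue_nonneg hM hK hφ hφμ)
  refine norm_le_one_of_newmarkChar_eq_zero hα hβ hκ
    (by nlinarith [hcond μr ⟨φ, hφ, hφμ⟩]) ?_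
  push_cast
  exact hchar

lemma exists_hasEigenvalue_baseChange_one_lt_norm (hM : M.PosDef) (hK : K.PosSemidef)
    (hβ : 0 ≤ β) (hh : 0 < h) (hL : ∀ p, IsNewmarkStep M K α β h p (L p)) {μ : ℝ}
    {φ : ι → ℝ} (hφ : φ ≠ 0) (hφμ : K *ᵥ φ = μ • M *ᵥ φ) (hμ : 1 < h ^ 2 * (α / 2 - β) * μ) :
    ∃ μc : ℂ, Module.End.HasEigenvalue (L.baseChange ℂ) μc ∧ 1 < ‖μc‖ := by
  have hκ : 0 ≤ h ^ 2 * μ := mul_nonneg (sq_nonneg h) (genEigenvalue_nonneg hM hK hφ hφμ)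
  obtain ⟨r, hr, hroot⟩ := exists_newmarkChar_eq_zero_lt_neg_one hβ hκ
    (by linarith : 1 < h ^ 2 * μ * (α / 2 - β))
  obtain ⟨v, a, hstep⟩ := exists_isNewmarkStep_smul_of_genEigen hh.ne' hφμ hroot
  have hLp : L (φ, v, a) = r • (φ, v, a) :=
    (existsUnique_isNewmarkStep hM hK hβ _).unique (hL _) hstep
  have hreal : Module.End.HasEigenvalue L r := Module.End.hasEigenvalue_of_hasEigenvector
    ⟨Module.End.mem_eigenspace_iff.2 hLp, fun h0 => hφ (congrArg Prod.fst h0)⟩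
  refine ⟨r, hreal.baseChange, ?_⟩
  rw [Complex.norm_real, Real.norm_eq_abs, abs_of_neg (by linarith)]
  linarith

theorem forall_hasEigenvalue_baseChange_norm_le_one_iff (hM : M.PosDef) (hK : K.PosSemidef)
    (hα : 1 / 2 ≤ α) (hβ : 0 ≤ β) (hh : 0 < h) (hL : ∀ p, IsNewmarkStep M K α β h p (L p)) :
    (∀ μ : ℂ, Module.End.HasEigenvalue (L.baseChange ℂ) μ → ‖μ‖ ≤ 1) ↔
      ∀ μ : ℝ, (∃ φ : ι → ℝ, φ ≠ 0 ∧ K *ᵥ φ = μ • M *ᵥ φ) → h ^ 2 * (α / 2 - β) * μ ≤ 1 := by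
  refine ⟨fun hstab μ ⟨φ, hφ, hφμ⟩ => not_lt.1 fun hμ => ?_,
    fun hcond μ => norm_le_one_of_hasEigenvalue_baseChange hM hK hα hβ hh hL hcond⟩
  obtain ⟨μc, hμc, hlt⟩ :=
    exists_hasEigenvalue_baseChange_one_lt_norm hM hK hβ hh hL hφ hφμ hμ
  exact (hstab μc hμc).not_gt hlt

end Stability

lemma mul_mul_sqrt_le_one_iff {h ω d : ℝ} (hh : 0 ≤ h) (hω : 0 ≤ ω) :
    h * ω * √d ≤ 1 ↔ h ^ 2 * d * ω ^ 2 ≤ 1 := by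
  rcases le_or_gt d 0 with hd | hd
  · rw [Real.sqrt_eq_zero'.2 hd, mul_zero]
    exact iff_of_true zero_le_one (by nlinarith [mul_nonneg (sq_nonneg h) (sq_nonneg ω)])
  · rw [← sq_le_one_iff₀ (by positivity), mul_pow, mul_pow, Real.sq_sqrt hd.le]
    ring_nf

/-- Newmark method for the n-DOF undamped linear system `M·ẍ + K·x = 0`, with
M symmetric positive definite and K symmetric positive semidefinite, α ≥ 1/2,
β ≥ 0, stepsize h > 0.  (1) The update sending `(x, v, a)` to the unique
`(x', v', a')` with `x' = x + h·v + h²·((1/2 − β)·a + β·a')`,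
`v' = v + h·((1 − α)·a + α·a')`, `M·a' = −K·x'` is well defined; (2) any linear
map `L` realizing this update is spectrally stable (all complex eigenvalues of
absolute value ≤ 1) iff `h²·(α/2 − β)·μ ≤ 1` for every generalized eigenvalue
μ of `K·φ = μ·M·φ`, equivalently iff `h·ω_max·√(α/2 − β) ≤ 1` where
`ω_max²` is the largest such μ. -/
theorem newmark_multidof_stability
    {n : ℕ} (M K : Matrix (Fin n) (Fin n) ℝ)
    (hM : M.PosDef) (hK : K.PosSemidef)
    (α β h : ℝ) (hα : 1 / 2 ≤ α) (hβ : 0 ≤ β) (hh : 0 < h) :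
    (∀ x v a : Fin n → ℝ,
      ∃! p : (Fin n → ℝ) × (Fin n → ℝ) × (Fin n → ℝ),
        p.1 = x + h • v + h ^ 2 • ((1 / 2 - β) • a + β • p.2.2) ∧
        p.2.1 = v + h • ((1 - α) • a + α • p.2.2) ∧
        M.mulVec p.2.2 = -(K.mulVec p.1)) ∧
    (∀ L : ((Fin n → ℝ) × (Fin n → ℝ) × (Fin n → ℝ)) →ₗ[ℝ]
           ((Fin n → ℝ) × (Fin n → ℝ) × (Fin n → ℝ)),
      (∀ x v a : Fin n → ℝ,
        (L (x, v, a)).1 =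
          x + h • v + h ^ 2 • ((1 / 2 - β) • a + β • (L (x, v, a)).2.2) ∧
        (L (x, v, a)).2.1 = v + h • ((1 - α) • a + α • (L (x, v, a)).2.2) ∧
        M.mulVec (L (x, v, a)).2.2 = -(K.mulVec (L (x, v, a)).1)) →
      (((∀ μ : ℂ,
            Module.End.HasEigenvalue (LinearMap.baseChange ℂ L) μ →
            ‖μ‖ ≤ 1) ↔
          (∀ μ : ℝ, (∃ φ : Fin n → ℝ, φ ≠ 0 ∧ K.mulVec φ = μ • M.mulVec φ) →
            h ^ 2 * (α / 2 - β) * μ ≤ 1)) ∧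
        (∀ ωmax : ℝ, 0 ≤ ωmax →
          (∃ φ : Fin n → ℝ, φ ≠ 0 ∧ K.mulVec φ = ωmax ^ 2 • M.mulVec φ) →
          (∀ μ : ℝ, (∃ φ : Fin n → ℝ, φ ≠ 0 ∧ K.mulVec φ = μ • M.mulVec φ) →
            μ ≤ ωmax ^ 2) →
          ((∀ μ : ℂ,
              Module.End.HasEigenvalue (LinearMap.baseChange ℂ L) μ →
              ‖μ‖ ≤ 1) ↔
            h * ωmax * Real.sqrt (α / 2 - β) ≤ 1)))) := by
  refine ⟨fun x v a => existsUnique_isNewmarkStep hM hK hβ (x, v, a), fun L hL' => ?_⟩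
  have hL : ∀ p, IsNewmarkStep M K α β h p (L p) := fun p => hL' p.1 p.2.1 p.2.2
  have hstab := forall_hasEigenvalue_baseChange_norm_le_one_iff hM hK hα hβ hh hL
  refine ⟨hstab, fun ω hω hωeig hωmax => ?_⟩
  rw [hstab, mul_mul_sqrt_le_one_iff hh.le hω]
  refine ⟨fun hcond => hcond _ hωeig, fun hle μ ⟨φ, hφ, hφμ⟩ => ?_⟩
  have hμ := genEigenvalue_nonneg hM hK hφ hφμ
  have hμω := hωmax μ ⟨φ, hφ, hφμ⟩
  rcases le_or_gt (α / 2 - β) 0 with hd | hd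
  · nlinarith [mul_nonneg (sq_nonneg h) hμ]
  · calc h ^ 2 * (α / 2 - β) * μ ≤ h ^ 2 * (α / 2 - β) * ω ^ 2 := by gcongr
      _ ≤ 1 := hle
end

section
/- Let H, Ḣ, Ḧ be real m×n matrices, N a real n×k matrix whose columns span the null space of H (i.e., H·N = 0 and every u ∈ ℝⁿ with H·u = 0 is of the form N·γ for some γ ∈ ℝᵏ), and b, c, d ∈ ℝᵐ. Suppose x_p, ẋ_p, ẍ_p ∈ ℝⁿ and real n×k matrices Ẋ_p, Ẍ_{p1} satisfy: H·x_p = b; H·ẋ_p = c − Ḣ·x_p; H·Ẋ_p = −Ḣ·N; H·ẍ_p = d − 2·Ḣ·ẋ_p − Ḧ·x_p; and H·Ẍ_{p1} = −2·Ḣ·Ẋ_p − Ḧ·N. Then for every triple (x, ẋ, ẍ) ∈ ℝⁿ × ℝⁿ × ℝⁿ satisfying H·x = b, H·ẋ + Ḣ·x = c, and H·ẍ + 2·Ḣ·ẋ + Ḧ·x = d, there exist α, α̇, α̈ ∈ ℝᵏ such that x = x_p + N·α, ẋ = ẋ_p + N·α̇ + Ẋ_p·α, and ẍ = ẍ_p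 + Ẍ_{p1}·α + 2·Ẋ_p·α̇ + N·α̈. That is, the tangent-space parametrization reaches every solution of the linearized constraints. -/
/-!
Each constraint level is a linear system with matrix `H` in the newest unknown. Once the
lower-order minimal coordinates are fixed, the particular parametrization solves that system
(this is what the auxiliary systems for `ẋ_p, Ẋ_p, ẍ_p, Ẍ_{p1}` are built for), so the given
solution differs from it by an element of `ker H`, which is the column span of `N`.
-/

open Matrix

section

variable {R m n k : Type*} [CommRing R] [Fintype n] [Fintype k]

theorem exists_eq_add_mulVec_of_mulVec_eq {H : Matrix m n R} {N : Matrix n k R}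
    (hspan : ∀ u : n → R, H *ᵥ u = 0 → ∃ γ : k → R, u = N *ᵥ γ)
    {u v : n → R} (h : H *ᵥ u = H *ᵥ v) : ∃ γ : k → R, u = v + N *ᵥ γ := by
  obtain ⟨γ, hγ⟩ := hspan (u - v) (by rw [mulVec_sub, h, sub_self])
  exact ⟨γ, by rw [← hγ, add_sub_cancel]⟩

variable {H Hd Hdd : Matrix m n R} {N Xdp Xddp1 : Matrix n k R} {c d : m → R}
  {xp xdp xddp : n → R}

theorem velocity_constraint_param
    (h2 : H *ᵥ xdp = c - Hd *ᵥ xp) (h3 : H * Xdp = -(Hd * N)) (al : k → R) :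
    H *ᵥ (xdp + Xdp *ᵥ al) + Hd *ᵥ (xp + N *ᵥ al) = c := by
  simp only [mulVec_add, mulVec_mulVec, h2, h3, neg_mulVec]
  abel

theorem acceleration_constraint_param
    (h3 : H * Xdp = -(Hd * N))
    (h4 : H *ᵥ xddp = d - (2 : R) • Hd *ᵥ xdp - Hdd *ᵥ xp)
    (h5 : H * Xddp1 = -((2 : R) • (Hd * Xdp)) - Hdd * N) (al ald : k → R) :
    H *ᵥ (xddp + Xddp1 *ᵥ al + (2 : R) • Xdp *ᵥ ald)
      + (2 : R) • Hd *ᵥ (xdp + N *ᵥ ald + Xdp *ᵥ al) + Hdd *ᵥ (xp + N *ᵥ al) = d := by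
  simp only [mulVec_add, mulVec_smul, mulVec_mulVec, h3, h4, h5, neg_mulVec, sub_mulVec,
    smul_mulVec]
  module

end

theorem tangent_space_param_surjective_general
    {m n k : ℕ}
    (H Hd Hdd : Matrix (Fin m) (Fin n) ℝ)
    (N : Matrix (Fin n) (Fin k) ℝ)
    (hspan : ∀ u : Fin n → ℝ, H.mulVec u = 0 → ∃ γ : Fin k → ℝ, u = N.mulVec γ)
    (b c d : Fin m → ℝ)
    (xp xdp xddp : Fin n → ℝ)
    (Xdp Xddp1 : Matrix (Fin n) (Fin k) ℝ)
    (h1 : H.mulVec xp = b)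
    (h2 : H.mulVec xdp = c - Hd.mulVec xp)
    (h3 : H * Xdp = -(Hd * N))
    (h4 : H.mulVec xddp = d - (2 : ℝ) • Hd.mulVec xdp - Hdd.mulVec xp)
    (h5 : H * Xddp1 = -((2 : ℝ) • (Hd * Xdp)) - Hdd * N) :
    ∀ x xd xdd : Fin n → ℝ,
      H.mulVec x = b →
      H.mulVec xd + Hd.mulVec x = c →
      H.mulVec xdd + (2 : ℝ) • Hd.mulVec xd + Hdd.mulVec x = d →
      ∃ al ald aldd : Fin k → ℝ,
        x = xp + N.mulVec al ∧
        xd = xdp + N.mulVec ald + Xdp.mulVec al ∧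
        xdd = xddp + Xddp1.mulVec al + (2 : ℝ) • Xdp.mulVec ald + N.mulVec aldd := by
  intro x xd xdd hx hxd hxdd
  obtain ⟨al, rfl⟩ := exists_eq_add_mulVec_of_mulVec_eq hspan (hx.trans h1.symm)
  obtain ⟨ald, hald⟩ := exists_eq_add_mulVec_of_mulVec_eq hspan
    (add_right_cancel (hxd.trans (velocity_constraint_param h2 h3 al).symm))
  replace hald : xd = xdp + N *ᵥ ald + Xdp *ᵥ al := by rw [hald]; abel
  subst hald
  obtain ⟨aldd, rfl⟩ := exists_eq_add_mulVec_of_mulVec_eq hspan (add_right_cancel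
    (add_right_cancel (hxdd.trans (acceleration_constraint_param h3 h4 h5 al ald).symm)))
  exact ⟨al, ald, aldd, rfl, rfl, rfl⟩

/-- The tangent-space parametrization reaches every solution of the linearized
constraints: if the columns of `N` span the null space of `H` and
`x_p, ẋ_p, Ẋ_p, ẍ_p, Ẍ_{p1}` solve the auxiliary systems, then every triple
`(x, ẋ, ẍ)` satisfying `H·x = b`, `H·ẋ + Ḣ·x = c`, `H·ẍ + 2·Ḣ·ẋ + Ḧ·x = d`
is of the form `x = x_p + N·α`, `ẋ = ẋ_p + N·α̇ + Ẋ_p·α`,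
`ẍ = ẍ_p + Ẍ_{p1}·α + 2·Ẋ_p·α̇ + N·α̈` for some `α, α̇, α̈ ∈ ℝᵏ`. -/
theorem tangent_space_param_surjective
    {m n k : ℕ}
    (H Hd Hdd : Matrix (Fin m) (Fin n) ℝ)
    (N : Matrix (Fin n) (Fin k) ℝ)
    (hHN : H * N = 0)
    (hspan : ∀ u : Fin n → ℝ, H.mulVec u = 0 → ∃ γ : Fin k → ℝ, u = N.mulVec γ)
    (b c d : Fin m → ℝ)
    (xp xdp xddp : Fin n → ℝ)
    (Xdp Xddp1 : Matrix (Fin n) (Fin k) ℝ)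
    (h1 : H.mulVec xp = b)
    (h2 : H.mulVec xdp = c - Hd.mulVec xp)
    (h3 : H * Xdp = -(Hd * N))
    (h4 : H.mulVec xddp = d - (2 : ℝ) • Hd.mulVec xdp - Hdd.mulVec xp)
    (h5 : H * Xddp1 = -((2 : ℝ) • (Hd * Xdp)) - Hdd * N) :
    ∀ x xd xdd : Fin n → ℝ,
      H.mulVec x = b →
      H.mulVec xd + Hd.mulVec x = c →
      H.mulVec xdd + (2 : ℝ) • Hd.mulVec xd + Hdd.mulVec x = d →
      ∃ al ald aldd : Fin k → ℝ,
        x = xp + N.mulVec al ∧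
        xd = xdp + N.mulVec ald + Xdp.mulVec al ∧
        xdd = xddp + Xddp1.mulVec al + (2 : ℝ) • Xdp.mulVec ald + N.mulVec aldd :=
  tangent_space_param_surjective_general H Hd Hdd N hspan b c d xp xdp xddp Xdp Xddp1 h1 h2 h3 h4 h5
end
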